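/- For p ≥ 1, q_p(G) ≤ ν(G), where ν(G) is the vertex bipartiteness: the minimum number of vertices whose deletion makes G bipartite. -/
import Mathlib


open Finset

variable {V : Type*}

/-- Signless p-Laplacian form: `Q_p(x) = Σ_{{i,j}∈E} |x_i + x_j|^p`. -/
noncomputable def Qp [Fintype V] (G : SimpleGraph V) [Fintype G.edgeSet] (p : ℝ)
    (x : V → ℝ) : ℝ :=
  ∑ e ∈ G.edgeFinset,
    Sym2.lift ⟨fun i j => |x i + x j| ^ p, fun i j => by simp [add_comm]⟩ e

/-- The p-norm unit sphere condition. -/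
def unitSphere [Fintype V] (p : ℝ) (x : V → ℝ) : Prop := ∑ i, |x i| ^ p = 1

/-- Smallest signless p-Laplacian eigenvalue. -/
noncomputable def qp [Fintype V] (G : SimpleGraph V) [Fintype G.edgeSet] (p : ℝ) : ℝ :=
  sInf {r | ∃ x : V → ℝ, unitSphere p x ∧ Qp G p x = r}

/-- Largest signless p-Laplacian eigenvalue. -/
noncomputable def lamp [Fintype V] (G : SimpleGraph V) [Fintype G.edgeSet] (p : ℝ) : ℝ :=
  sSup {r | ∃ x : V → ℝ, unitSphere p x ∧ Qp G p x = r}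

open Classical in
/-- Number of edges with both endpoints in `S`. -/
noncomputable def eIn [Fintype V] (G : SimpleGraph V) [Fintype G.edgeSet] (S : Finset V) : ℕ :=
  (G.edgeFinset.filter fun e => ∀ v ∈ e, v ∈ S).card

open Classical in
/-- Number of edges with exactly one endpoint in `U`. -/
noncomputable def cutN [Fintype V] (G : SimpleGraph V) [Fintype G.edgeSet] (U : Finset V) : ℕ :=
  (G.edgeFinset.filter fun e => (∃ v ∈ e, v ∈ U) ∧ (∃ w ∈ e, w ∉ U)).card

/-- Desai–Rao bipartiteness parameter ψ(G). -/
noncomputable def psi [Fintype V] [DecidableEq V] (G : SimpleGraph V) [Fintype G.edgeSet] : ℝ :=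
  sInf {r | ∃ S T : Finset V, Disjoint S T ∧ (S ∪ T).Nonempty ∧
    r = (2 * eIn G S + 2 * eIn G T + cutN G (S ∪ T)) / (S ∪ T).card}

open Classical in
/-- `h_g(U)`: min over thresholds `0 ≤ t < max g` of `cut(C_t)/|C_t|` where `C_t = {i : g i > t}`. -/
noncomputable def hgC [Fintype V] [DecidableEq V] (G : SimpleGraph V) [Fintype G.edgeSet]
    (g : V → ℝ) : ℝ :=
  sInf {r | ∃ t : ℝ, 0 ≤ t ∧ t < sSup (Set.range g) ∧
    r = (cutN G (univ.filter fun i => t < g i) : ℝ) / (univ.filter fun i => t < g i).card}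

/-- Eigenpair of the signless p-Laplacian. -/
def IsEigenpair [Fintype V] (G : SimpleGraph V) [DecidableRel G.Adj] (p : ℝ)
    (x : V → ℝ) (μ : ℝ) : Prop :=
  ∀ k, ∑ j ∈ G.neighborFinset k, Real.sign (x k + x j) * |x k + x j| ^ (p - 1)
      = μ * (Real.sign (x k) * |x k| ^ (p - 1))

/-- Vertex bipartiteness: minimum number of vertices to delete to make `G` bipartite. -/
noncomputable def nuG [Fintype V] [DecidableEq V] (G : SimpleGraph V) : ℕ :=
  sInf {k | ∃ S : Finset V, S.card = k ∧ ((SimpleGraph.induce ((↑S : Set V)ᶜ) G).Colorable 2)}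

lemma aux_fin2_stmt19 (a b : Fin 2) (h : a ≠ b) :
    ((if a = 0 then (1:ℝ) else -1) + (if b = 0 then 1 else -1)) = 0 := by
  fin_cases a <;> fin_cases b <;> simp_all

theorem stmt_19 [Fintype V] [DecidableEq V] [Nonempty V] (G : SimpleGraph V)
    [DecidableRel G.Adj] (p : ℝ) (hp : 1 ≤ p) :
    qp G p ≤ (nuG G : ℝ) := by
  classical
  have hp0 : p ≠ 0 := by linarith
  obtain ⟨v0⟩ := ‹Nonempty V›
  -- a witness showing the defining set of nuG is nonempty, with card ≤ n-1
  have hmem1 : (Finset.univ.erase v0).card ∈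
      {k | ∃ S : Finset V, S.card = k ∧
        ((SimpleGraph.induce ((↑S : Set V)ᶜ) G).Colorable 2)} := by
    refine ⟨Finset.univ.erase v0, rfl, ⟨⟨fun _ => 0, ?_⟩⟩⟩
    rintro ⟨a, ha⟩ ⟨b, hb⟩ hab
    have ha' : a = v0 := by simpa using ha
    have hb' : b = v0 := by simpa using hb
    have hadj : G.Adj a b := hab
    rw [ha', hb'] at hadj
    exact absurd hadj (G.irrefl)
  have hnumem := Nat.sInf_mem (⟨_, hmem1⟩ : Set.Nonempty _)
  obtain ⟨S, hScard0, ⟨C⟩⟩ := hnumem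
  have hScard : S.card = nuG G := hScard0
  have hSlt : S.card < Fintype.card V := by
    have hnule : nuG G ≤ (Finset.univ.erase v0).card := Nat.sInf_le hmem1
    rw [hScard]
    have h1 : (Finset.univ.erase v0).card = Fintype.card V - 1 := by
      rw [Finset.card_erase_of_mem (Finset.mem_univ v0), Finset.card_univ]
    have h2 : 0 < Fintype.card V := Fintype.card_pos
    omega
  have hm : 0 < Sᶜ.card := by
    rw [Finset.card_compl]; omega
  set m : ℕ := Sᶜ.card with hmdef
  set cp : ℝ := (m : ℝ)⁻¹ with hcp
  have hcp0 : 0 ≤ cp := by positivity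
  set c : ℝ := cp ^ (p⁻¹ : ℝ) with hcdef
  have hc0 : 0 ≤ c := Real.rpow_nonneg hcp0 _
  have hcpow : c ^ p = cp := by
    rw [hcdef, ← Real.rpow_mul hcp0, inv_mul_cancel₀ hp0, Real.rpow_one]
  -- the test vector
  set σ : V → ℝ := fun i =>
    if h : i ∈ ((↑S : Set V)ᶜ) then (if C ⟨i, h⟩ = 0 then 1 else -1) else 0 with hσdef
  set x : V → ℝ := fun i => c * σ i with hxdef
  have hmemC : ∀ i, i ∉ S → i ∈ ((↑S : Set V)ᶜ) := fun i hi => by simpa using hi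
  have hσS : ∀ i ∈ S, σ i = 0 := by
    intro i hi
    simp only [hσdef]
    rw [dif_neg (by simpa using hi)]
  have hσabs : ∀ i ∉ S, |σ i| = 1 := by
    intro i hi
    simp only [hσdef]
    rw [dif_pos (hmemC i hi)]
    split_ifs <;> norm_num
  have hxabs : ∀ i, |x i| ^ p = if i ∈ S then 0 else cp := by
    intro i
    by_cases hi : i ∈ S
    · rw [if_pos hi, hxdef]
      simp only [hσS i hi, mul_zero, abs_zero]
      exact Real.zero_rpow hp0
    · rw [if_neg hi, hxdef]
      simp only [abs_mul, hσabs i hi, mul_one, abs_of_nonneg hc0]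
      exact hcpow
  have hunit : unitSphere p x := by
    unfold unitSphere
    calc (∑ i, |x i| ^ p) = ∑ i, (if i ∈ Sᶜ then cp else 0) := by
          refine Finset.sum_congr rfl fun i _ => ?_
          rw [hxabs i]
          by_cases hi : i ∈ S <;> simp [hi]
      _ = ∑ i ∈ Sᶜ, cp := by
          rw [Finset.sum_ite_mem, Finset.univ_inter]
      _ = (m : ℝ) * cp := by rw [Finset.sum_const, nsmul_eq_mul, hmdef]
      _ = 1 := by
          rw [hcp]
          field_simp
  -- the cross edges
  set crossT : Finset (Sym2 V) := (S ×ˢ Sᶜ).image (fun a : V × V => s(a.1, a.2))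
    with hcrossT
  have hQle : Qp G p x ≤ (S.card : ℝ) := by
    have hstep : Qp G p x ≤ ∑ e ∈ G.edgeFinset, (if e ∈ crossT then cp else 0) := by
      unfold Qp
      refine Finset.sum_le_sum ?_
      intro e he
      induction e using Sym2.ind with
      | _ i j =>
        have hadj : G.Adj i j := by
          rw [SimpleGraph.mem_edgeFinset, SimpleGraph.mem_edgeSet] at he
          exact he
        simp only [Sym2.lift_mk]
        have hite0 : (0:ℝ) ≤ if s(i,j) ∈ crossT then cp else 0 := by
          split_ifs <;> [exact hcp0; exact le_rfl]
        by_cases hi : i ∈ S <;> by_cases hj : j ∈ S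
        · -- both in S
          have : x i + x j = 0 := by
            simp [hxdef, hσS i hi, hσS j hj]
          rw [this, abs_zero, Real.zero_rpow hp0]
          exact hite0
        · -- i ∈ S, j ∉ S : cross edge
          have hmem : s(i,j) ∈ crossT := by
            rw [hcrossT]
            exact Finset.mem_image.2 ⟨(i, j),
              Finset.mem_product.2 ⟨hi, Finset.mem_compl.2 hj⟩, rfl⟩
          rw [if_pos hmem]
          have : |x i + x j| = c := by
            simp only [hxdef, hσS i hi, mul_zero, zero_add, abs_mul,
              hσabs j hj, mul_one, abs_of_nonneg hc0]
          rw [this, hcpow]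
        · -- j ∈ S, i ∉ S : cross edge
          have hmem : s(i,j) ∈ crossT := by
            rw [hcrossT]
            refine Finset.mem_image.2 ⟨(j, i),
              Finset.mem_product.2 ⟨hj, Finset.mem_compl.2 hi⟩, ?_⟩
            exact Sym2.eq_swap
          rw [if_pos hmem]
          have : |x i + x j| = c := by
            simp only [hxdef, hσS j hj, mul_zero, add_zero, abs_mul,
              hσabs i hi, mul_one, abs_of_nonneg hc0]
          rw [this, hcpow]
        · -- both outside S : opposite colors
          have hi' := hmemC i hi
          have hj' := hmemC j hj
          have hadj' : (SimpleGraph.induce ((↑S : Set V)ᶜ) G).Adj ⟨i, hi'⟩ ⟨j, hj'⟩ := by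
            simpa using hadj
          have hne := C.valid hadj'
          have hzero : σ i + σ j = 0 := by
            simp only [hσdef]
            rw [dif_pos hi', dif_pos hj']
            exact aux_fin2_stmt19 _ _ hne
          have : x i + x j = 0 := by
            rw [hxdef]; simp only []
            rw [← mul_add, hzero, mul_zero]
          rw [this, abs_zero, Real.zero_rpow hp0]
          exact hite0
    refine hstep.trans ?_
    have hcard : (G.edgeFinset ∩ crossT).card ≤ S.card * m := by
      calc (G.edgeFinset ∩ crossT).card ≤ crossT.card :=
            Finset.card_le_card (Finset.inter_subset_right)
        _ ≤ (S ×ˢ Sᶜ).card := Finset.card_image_le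
        _ = S.card * m := by rw [Finset.card_product, hmdef]
    calc (∑ e ∈ G.edgeFinset, if e ∈ crossT then cp else 0)
        = ∑ e ∈ G.edgeFinset ∩ crossT, cp := by rw [Finset.sum_ite_mem]
      _ = ((G.edgeFinset ∩ crossT).card : ℝ) * cp := by
          rw [Finset.sum_const, nsmul_eq_mul]
      _ ≤ ((S.card * m : ℕ) : ℝ) * cp := by
          apply mul_le_mul_of_nonneg_right _ hcp0
          exact_mod_cast hcard
      _ = (S.card : ℝ) := by
          push_cast
          rw [hcp]
          have hm' : (m : ℝ) ≠ 0 := by positivity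
          field_simp
  -- conclude
  have hbdd : BddBelow {r | ∃ y : V → ℝ, unitSphere p y ∧ Qp G p y = r} := by
    refine ⟨0, ?_⟩
    rintro r ⟨y, -, rfl⟩
    unfold Qp
    refine Finset.sum_nonneg fun e _ => ?_
    induction e using Sym2.ind with
    | _ i j =>
      simp only [Sym2.lift_mk]
      exact Real.rpow_nonneg (abs_nonneg _) _
  have hmemq : Qp G p x ∈ {r | ∃ y : V → ℝ, unitSphere p y ∧ Qp G p y = r} :=
    ⟨x, hunit, rfl⟩
  calc qp G p ≤ Qp G p x := csInf_le hbdd hmemq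
    _ ≤ (S.card : ℝ) := hQle
    _ = (nuG G : ℝ) := by exact_mod_cast hScard
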